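/- In the Klein bottle group K = ⟨a, b | bab⁻¹ = a⁻¹⟩, the normalizer of the cyclic subgroup K_n = ⟨a^n b⟩ (for any n ∈ Z) is isomorphic to Z. -/

import Mathlib

/-- The Klein bottle group `K = ℤ ⋊ ℤ`, where the generator of the acting copy of `ℤ`
acts on the normal copy of `ℤ` by inversion.  This realizes the presentation
`⟨a, b | b a b⁻¹ = a⁻¹⟩`. -/
abbrev KleinBottleGroup : Type :=
  Multiplicative ℤ ⋊[zpowersHom (MulAut (Multiplicative ℤ)) (MulEquiv.inv (Multiplicative ℤ))]
    Multiplicative ℤ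

/-- The generator `a` of the Klein bottle group (the normal `ℤ` factor). -/
def kleinA : KleinBottleGroup := SemidirectProduct.inl (Multiplicative.ofAdd 1)

/-- The generator `b` of the Klein bottle group (the acting `ℤ` factor). -/
def kleinB : KleinBottleGroup := SemidirectProduct.inr (Multiplicative.ofAdd 1)

/-!
The projection `rightHom : K → ℤ` sends `g = aⁿ b` to a generator. If `x g x⁻¹ = gᵏ`, applying
`rightHom` gives `k = 1`, so the normalizer of `⟨g⟩` lies in the centralizer of `g`. Modulo a
power of `g`, an element of the centralizer lies in the kernel `⟨a⟩` of `rightHom`, and `aᵐ`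
commutes with `aⁿ b` only if `aᵐ = a⁻ᵐ`, i.e. `m = 0`. So the normalizer is `⟨g⟩`, which is
infinite cyclic because its image in `ℤ` is.
-/

open SemidirectProduct Multiplicative Subgroup

section

variable {G : Type*} [Group G]

theorem Subgroup.normalizer_zpowers_le_centralizer {A : Type*} [CommGroup A] (f : G →* A)
    {g : G} (hg : ¬IsOfFinOrder (f g)) :
    normalizer (zpowers g : Set G) ≤ centralizer {g} := by
  intro x hx
  obtain ⟨k, hk : g ^ k = x * g * x⁻¹⟩ := (mem_normalizer_iff.mp hx g).mp (mem_zpowers g)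
  have hfk : f g ^ k = f g ^ (1 : ℤ) := by
    simpa [mul_comm (f x), mul_assoc] using congrArg f hk
  have hk1 : k = 1 := injective_zpow_iff_not_isOfFinOrder.mpr hg hfk
  rw [mem_centralizer_singleton_iff, ← mul_inv_eq_iff_eq_mul, ← hk, hk1, zpow_one]

theorem Subgroup.nonempty_zpowers_mulEquiv_int {g : G} (hg : ¬IsOfFinOrder g) :
    Nonempty (zpowers g ≃* Multiplicative ℤ) :=
  ⟨(MonoidHom.ofInjective (f := zpowersHom G g)
    ((injective_zpow_iff_not_isOfFinOrder.mpr hg).comp toAdd.injective)).symm⟩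

end

theorem kleinA_zpow (n : ℤ) : kleinA ^ n = inl (ofAdd n) := by
  rw [kleinA, ← map_zpow, ← ofAdd_zsmul, smul_eq_mul, mul_one]

theorem rightHom_kleinA_zpow_mul_kleinB (n : ℤ) : rightHom (kleinA ^ n * kleinB) = ofAdd 1 := by
  simp [kleinA_zpow, kleinB]

theorem not_isOfFinOrder_rightHom_kleinA_zpow_mul_kleinB (n : ℤ) :
    ¬IsOfFinOrder (rightHom (kleinA ^ n * kleinB)) := by
  rw [rightHom_kleinA_zpow_mul_kleinB]
  exact not_isOfFinOrder_of_isMulTorsionFree (by decide)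

theorem kleinA_zpow_mul_kleinB_mul_inl (n : ℤ) (m : Multiplicative ℤ) :
    kleinA ^ n * kleinB * inl m = inl m⁻¹ * (kleinA ^ n * kleinB) := by
  ext <;> simp [kleinA_zpow, kleinB, mul_comm]

theorem centralizer_kleinA_zpow_mul_kleinB_le (n : ℤ) :
    centralizer {kleinA ^ n * kleinB} ≤ zpowers (kleinA ^ n * kleinB) := by
  set g := kleinA ^ n * kleinB
  intro x hx
  set j := toAdd (rightHom x)
  obtain ⟨m, hm⟩ : x * (g ^ j)⁻¹ ∈ (inl : _ →* KleinBottleGroup).range := by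
    rw [range_inl_eq_ker_rightHom, MonoidHom.mem_ker, map_mul, map_inv, map_zpow,
      rightHom_kleinA_zpow_mul_kleinB, ← ofAdd_zsmul, smul_eq_mul, mul_one, ofAdd_toAdd,
      mul_inv_cancel]
  have hmg : inl m * g = g * inl m := by
    rw [hm]
    exact Commute.mul_left (mem_centralizer_singleton_iff.mp hx)
      ((Commute.refl g).zpow_left j).inv_left
  have hm1 : m = 1 := by
    rw [kleinA_zpow_mul_kleinB_mul_inl, mul_left_inj, inl_inj] at hmg
    exact inv_eq_self.mp hmg.symm
  rw [hm1, map_one, eq_comm, mul_inv_eq_one] at hm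
  exact hm ▸ zpow_mem (mem_zpowers g) j

theorem normalizer_zpowers_kleinA_zpow_mul_kleinB (n : ℤ) :
    normalizer (zpowers (kleinA ^ n * kleinB) : Set KleinBottleGroup) =
      zpowers (kleinA ^ n * kleinB) :=
  le_antisymm
    ((normalizer_zpowers_le_centralizer rightHom
      (not_isOfFinOrder_rightHom_kleinA_zpow_mul_kleinB n)).trans
      (centralizer_kleinA_zpow_mul_kleinB_le n))
    le_normalizer

/-- In the Klein bottle group `K = ⟨a, b | b a b⁻¹ = a⁻¹⟩`, the normalizer of the cyclic
subgroup generated by `aⁿ b` is infinite cyclic, i.e. isomorphic to `ℤ`. -/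
theorem klein_normalizer_isomorphic_Z (n : ℤ) :
    Nonempty (Subgroup.normalizer (Subgroup.zpowers (kleinA ^ n * kleinB) : Set KleinBottleGroup) ≃* Multiplicative ℤ) := by
  rw [normalizer_zpowers_kleinA_zpow_mul_kleinB]
  exact nonempty_zpowers_mulEquiv_int fun hfin =>
    not_isOfFinOrder_rightHom_kleinA_zpow_mul_kleinB n (rightHom.isOfFinOrder hfin)
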